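/- Both the supertrace and the trace transfer matrices of the inhomogeneous fundamental gl(M|N) chain generate commutative families: for all u, v ∈ ℂ, [st(u), st(v)] = 0 and [t(u), t(v)] = 0 in End(H). -/

import Mathlib

open scoped BigOperators

noncomputable section

namespace SuperSpin

/-- The ℤ₂-grading on `Fin n` (0-indexed): grade `0` for the first `M` indices,
grade `1` for the remaining ones.  `gr M i` is the grade of the (paper, 1-indexed)
index `i+1`. -/
def gr (M : ℕ) {n : ℕ} (i : Fin n) : ℕ := if (i : ℕ) < M then 0 else 1

/-- `End(V ⊗ V)` for `V = ℂⁿ`, as matrices indexed by pairs. -/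
abbrev E2 (n : ℕ) := Matrix (Fin n × Fin n) (Fin n × Fin n) ℂ

/-- The graded permutation operator `P (e_c ⊗ e_d) = (-1)^{[c][d]} e_d ⊗ e_c`. -/
def Pm (M n : ℕ) : E2 n :=
  Matrix.of fun p q =>
    if p.1 = q.2 ∧ p.2 = q.1 then ((-1 : ℂ) ^ (gr M q.1 * gr M q.2)) else 0

/-- The R-matrix `R(u) = u·id - hb·P`. -/
def Rm (M n : ℕ) (hb u : ℂ) : E2 n := u • (1 : E2 n) - hb • Pm M n

/-- The operator `Q (e_c ⊗ e_d) = δ_{cd} (-1)^{[d]} ∑_a e_a ⊗ e_a`. -/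
def Qm (M n : ℕ) : E2 n :=
  Matrix.of fun p q => if q.1 = q.2 ∧ p.1 = p.2 then ((-1 : ℂ) ^ (gr M q.2)) else 0

/-- Graded partial transposition in the second tensor factor. -/
def pt2 (M n : ℕ) (X : E2 n) : E2 n :=
  Matrix.of fun p q =>
    ((-1 : ℂ) ^ (gr M p.2 * gr M q.2 + gr M q.2)) * X (p.1, q.2) (q.1, p.2)

/-- Graded transposition of an `n × n` matrix: `(Aᵗ)_{ij} = (-1)^{[i][j]+[j]} A_{ji}`. -/
def gTr (M : ℕ) {n : ℕ} (A : Matrix (Fin n) (Fin n) ℂ) : Matrix (Fin n) (Fin n) ℂ :=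
  Matrix.of fun i j => ((-1 : ℂ) ^ (gr M i * gr M j + gr M j)) * A j i

/-- `A ⊗ id` acting on `V ⊗ V`. -/
def m1 {n : ℕ} (A : Matrix (Fin n) (Fin n) ℂ) : E2 n :=
  Matrix.of fun p q => A p.1 q.1 * (if p.2 = q.2 then 1 else 0)

/-- `id ⊗ A` acting on `V ⊗ V`. -/
def m2 {n : ℕ} (A : Matrix (Fin n) (Fin n) ℂ) : E2 n :=
  Matrix.of fun p q => (if p.1 = q.1 then 1 else 0) * A p.2 q.2

/-- `R₂₁(x) = P ∘ R(x) ∘ P`. -/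
def R21 (M n : ℕ) (hb u : ℂ) : E2 n := Pm M n * Rm M n hb u * Pm M n

/-- The graded reflection equation for a matrix-valued function `K`. -/
def GRE (M n : ℕ) (hb : ℂ) (K : ℂ → Matrix (Fin n) (Fin n) ℂ) : Prop :=
  ∀ u v : ℂ,
    Rm M n hb (u - v) * m1 (K u) * R21 M n hb (u + v) * m2 (K v)
      = m2 (K v) * Rm M n hb (u + v) * m1 (K u) * R21 M n hb (u - v)

/-- `End(V^{⊗m})`, with basis indexed by functions `Fin m → Fin n`. -/
abbrev Ten (n m : ℕ) := Matrix (Fin m → Fin n) (Fin m → Fin n) ℂ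

/-- The Koszul embedding of `X ∈ End(V ⊗ V)` acting on the factors `i < j` of
`V^{⊗ m}` (identity on the other factors, with the graded crossing signs produced
by conjugation with the adjacent graded permutation operators). -/
def kEmb (M n m : ℕ) (i j : Fin m) (X : E2 n) : Ten n m :=
  Matrix.of fun f g =>
    (if ∀ l, l ≠ i → l ≠ j → f l = g l then (1 : ℂ) else 0)
      * X (f i, f j) (g i, g j)
      * (-1 : ℂ) ^ ((gr M (f j) + gr M (g j)) *
          ∑ l ∈ Finset.univ.filter (fun l => i < l ∧ l < j), gr M (g l))

/-- The monodromy matrix `𝒯(u) = R_{1,2}(u-a₁) ⋯ R_{1,L+1}(u-a_L)` of the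
inhomogeneous fundamental chain, acting on `V ⊗ H = V^{⊗(L+1)}` (auxiliary space
in position `0`). -/
def Tmono (M n L : ℕ) (hb : ℂ) (a : Fin L → ℂ) (u : ℂ) : Ten n (L + 1) :=
  (List.ofFn fun k : Fin L => kEmb M n (L + 1) 0 k.succ (Rm M n hb (u - a k))).prod

/-- The block entry `X_{ab} ∈ End(H)` of an operator `X` on `V ⊗ H`. -/
def blk {n L : ℕ} (X : Ten n (L + 1)) (a b : Fin n) : Ten n L :=
  Matrix.of fun f g => X (Fin.cons a f) (Fin.cons b g)

/-- Supertrace transfer matrix `st(u) = ∑ (-1)^{[a]} 𝒯_{aa}(u)`. -/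
def stm (M n L : ℕ) (hb : ℂ) (a : Fin L → ℂ) (u : ℂ) : Ten n L :=
  ∑ i : Fin n, ((-1 : ℂ) ^ gr M i) • blk (Tmono M n L hb a u) i i

/-- Trace transfer matrix `t(u) = ∑ 𝒯_{aa}(u)`. -/
def tm (M n L : ℕ) (hb : ℂ) (a : Fin L → ℂ) (u : ℂ) : Ten n L :=
  ∑ i : Fin n, blk (Tmono M n L hb a u) i i

/-- The pseudovacuum `v⁺ = e₁ ⊗ ⋯ ⊗ e₁`. -/
def vplus (n L : ℕ) : (Fin L → Fin n) → ℂ :=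
  fun f => if ∀ l, (f l : ℕ) = 0 then 1 else 0

/-- The pseudovacuum weights `λ_j(w)` (paper index `j ≥ 1`):
`λ₁(w) = ∏ (w - a_m - hb)`, `λ_j(w) = ∏ (w - a_m)` for `j ≥ 2`. -/
def lamP (L : ℕ) (hb : ℂ) (a : Fin L → ℂ) (j : ℕ) (w : ℂ) : ℂ :=
  if j = 1 then ∏ m, (w - a m - hb) else ∏ m, (w - a m)

/-- `c_m = ∑_{l=1}^m (-1)^{[l]}` (so `c_0 = 0`). -/
def cP (M : ℕ) (m : ℕ) : ℂ := ∑ l ∈ Finset.range m, (if l < M then (1 : ℂ) else -1)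

/-- `λ'_k(w) = ∏_{m=1}^{k-1} λ_m(w + hb c_m) / ∏_{m=1}^{k} λ_m(w + hb c_{m-1})`
(paper index `k ≥ 1`). -/
def lamPr (M L : ℕ) (hb : ℂ) (a : Fin L → ℂ) (k : ℕ) (w : ℂ) : ℂ :=
  (∏ m ∈ Finset.Icc 1 (k - 1), lamP L hb a m (w + hb * cP M m)) /
    (∏ m ∈ Finset.Icc 1 k, lamP L hb a m (w + hb * cP M (m - 1)))

/-- The global generators `Δ(E_{ab}) = ∑_k E_{ab}^{(k)}` on `H = V^{⊗L}`. -/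
def Delta (M n L : ℕ) (a b : Fin n) : Ten n L :=
  ∑ k : Fin L, Matrix.of fun f g =>
    if f k = a ∧ g k = b ∧ ∀ l, l ≠ k → f l = g l then
      (-1 : ℂ) ^ ((gr M a + gr M b) *
        ∑ l ∈ Finset.univ.filter (fun l => l < k), gr M (g l))
    else 0

/-- The diagonal entry (at paper index `j`, `1 ≤ j ≤ n`) of the diagonal boundary
matrix with parameter `ξ` and blocks determined by `L₁ ≤ L₂`. -/
def kdval (ξ : ℂ) (L₁ L₂ : ℕ) (j : ℕ) (u : ℂ) : ℂ :=
  if L₁ < j ∧ j ≤ L₂ then u + ξ else ξ - u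

/-- The diagonal boundary matrix `K(u)`. -/
def Kdiag (n : ℕ) (ξ : ℂ) (L₁ L₂ : ℕ) (u : ℂ) : Matrix (Fin n) (Fin n) ℂ :=
  Matrix.diagonal fun j => kdval ξ L₁ L₂ ((j : ℕ) + 1) u

/-- An `n × n` matrix acting on the auxiliary (first) factor of `V^{⊗(L+1)}`. -/
def onAux {n L : ℕ} (A : Matrix (Fin n) (Fin n) ℂ) : Ten n (L + 1) :=
  Matrix.of fun f g => A (f 0) (g 0) * (if ∀ l, l ≠ 0 → f l = g l then 1 else 0)

/-- The double-row monodromy matrix `ℬ(u) = 𝒯(u) (K(u) ⊗ id_H) 𝒯(-u)⁻¹`. -/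
def Bmono (M n L : ℕ) (hb : ℂ) (a : Fin L → ℂ) (ξ : ℂ) (L₁ L₂ : ℕ) (u : ℂ) :
    Ten n (L + 1) :=
  Tmono M n L hb a u * onAux (Kdiag n ξ L₁ L₂ u) * (Tmono M n L hb a (-u))⁻¹

/-- The open-chain transfer matrix `b(u) = ∑ (-1)^{[a]} K⁺_{aa}(u) ℬ_{aa}(u)`. -/
def bop (M n L : ℕ) (hb : ℂ) (a : Fin L → ℂ) (ξ : ℂ) (L₁ L₂ : ℕ)
    (ξ' : ℂ) (L₁' L₂' : ℕ) (u : ℂ) : Ten n L :=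
  ∑ i : Fin n,
    (((-1 : ℂ) ^ gr M i) * Kdiag n ξ' L₁' L₂' u i i) •
      blk (Bmono M n L hb a ξ L₁ L₂ u) i i

/-- The functions `g_k(u)` of the open-chain pseudovacuum (paper index `k ≥ 1`). -/
def gP (M : ℕ) (hb ξ : ℂ) (L₁ L₂ : ℕ) (k : ℕ) (u : ℂ) : ℂ :=
  if k ≤ L₁ then ξ - u
  else if k ≤ L₂ then ξ + u - hb * cP M L₁
  else ξ - u - hb * (cP M L₁ - cP M L₂)

/-- The functions `a_k(u)` of the open-chain pseudovacuum (paper index `k ≥ 1`). -/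
def aP (M L : ℕ) (hb : ℂ) (a : Fin L → ℂ) (k : ℕ) (u : ℂ) : ℂ :=
  (if k ≤ M then (1 : ℂ) else -1) * hb *
    (2 * u * lamP L hb a k u * lamPr M L hb a k (-u)) /
    ((2 * u - hb * cP M k) * (2 * u - hb * cP M (k - 1)))


/-!
Write `T₀(u) = P₀₁ (1 ⊗ 𝒯(u)) P₀₁` and `T₁(v) = 1 ⊗ 𝒯(v)` for the two copies of the monodromy
on `V ⊗ V ⊗ H` with auxiliary factor `0`, resp. `1`. They satisfy the RTT relation
`R₀₁(u-v) T₀(u) T₁(v) = T₁(v) T₀(u) R₀₁(u-v)`, obtained one quantum factor at a time from the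
Yang–Baxter equation. The latter only uses that the graded transpositions `P₀₁, P₀ₖ, P₁ₖ` satisfy
the relations of `S₃`, and `R₀ⱼ` commutes with `R₁ₖ` for `j ≠ k`; each of these reduces to an
identity of permutations and a parity identity between Koszul sign exponents.

Both `st` and `t` are twisted traces `τ(u) = ∑ₐ sₐ 𝒯ₐₐ(u)`, with `sₐ = (-1)^[a]` resp. `sₐ = 1`.
The twisted trace over factors `0` and `1` sends `T₀(u) T₁(v)` to `τ(u) τ(v)` and `T₁(v) T₀(u)`
to `τ(v) τ(u)`, and it is cyclic with respect to `P₀₁`. For `u - v ≠ ±ħ` the inverse of `R₀₁(u-v)` is a multiple of `(u-v) + ħ P₀₁`, so the RTT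
relation gives `τ(u) τ(v) = τ(v) τ(u)`; the two remaining values of `v` follow by continuity.
-/

open Finset Equiv

variable {M n m : ℕ}

lemma neg_one_pow_eq_of_cast_eq {a b : ℕ} (h : (a : ZMod 2) = b) :
    (-1 : ℂ) ^ a = (-1) ^ b := by
  rw [neg_one_pow_eq_pow_mod_two, neg_one_pow_eq_pow_mod_two (n := b),
    (ZMod.natCast_eq_natCast_iff' a b 2).1 h]

lemma mul_list_prod_mul_of_mul_self_eq_one {α : Type*} [Monoid α] {a : α} (ha : a * a = 1)
    (l : List α) : a * l.prod * a = (l.map fun x => a * x * a).prod := by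
  induction l with
  | nil => simp [ha]
  | cons x l ih =>
    rw [List.map_cons, List.prod_cons, List.prod_cons, ← ih]
    simp only [mul_assoc, ← mul_assoc a a, ha, one_mul]

theorem mul_prod_map_mul_prod_map_of_yangBaxter {α ι : Type*} [Monoid α] (r : α) (B C : ι → α)
    {l : List ι} (hl : l.Nodup) (hBC : ∀ i j, i ≠ j → Commute (B i) (C j))
    (hybe : ∀ i, r * B i * C i = C i * B i * r) :
    r * (l.map B).prod * (l.map C).prod = (l.map C).prod * (l.map B).prod * r := by
  induction l with
  | nil => simp
  | cons i l ih =>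
    obtain ⟨hi, hl⟩ := List.nodup_cons.1 hl
    have hPC : Commute (l.map B).prod (C i) := Commute.list_prod_left _ _ fun x hx => by
      obtain ⟨j, hj, rfl⟩ := List.mem_map.1 hx
      exact hBC j i (ne_of_mem_of_not_mem hj hi)
    have hBQ : Commute (B i) (l.map C).prod := Commute.list_prod_right _ _ fun x hx => by
      obtain ⟨j, hj, rfl⟩ := List.mem_map.1 hx
      exact hBC i j (ne_of_mem_of_not_mem hj hi).symm
    simp only [List.map_cons, List.prod_cons]
    calc r * (B i * (l.map B).prod) * (C i * (l.map C).prod)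
        = r * B i * C i * ((l.map B).prod * (l.map C).prod) := by
          simp only [mul_assoc, hPC.left_comm]
      _ = C i * B i * (r * (l.map B).prod * (l.map C).prod) := by
          rw [hybe]; simp only [mul_assoc]
      _ = C i * B i * ((l.map C).prod * (l.map B).prod * r) := by rw [ih hl]
      _ = C i * (l.map C).prod * (B i * (l.map B).prod) * r := by
          simp only [mul_assoc, hBQ.left_comm]

theorem yangBaxter_of_braid {A : Type*} [Ring A] [Algebra ℂ A] {a b c : A} (ha : a * a = 1)
    (hconj : b * a = a * c) (hbraid : b * a = c * b) (h y z : ℂ) :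
    ((y - z) • 1 - h • a) * (y • 1 - h • b) * (z • 1 - h • c)
      = (z • 1 - h • c) * (y • 1 - h • b) * ((y - z) • 1 - h • a) := by
  have hc : c = a * b * a := by
    rw [mul_assoc, hconj, ← mul_assoc, ha, one_mul]
  have hca : c * a = a * b := by rw [hc, mul_assoc, ha, mul_one]
  have hc' : c = b * a * b :=
    calc c = a * (b * a) := by rw [hc, mul_assoc]
      _ = a * c * b := by rw [hbraid, mul_assoc]
      _ = b * a * b := by rw [← hconj]
  have hbc : b * c = a * b :=
    calc b * c = b * a * b * a := by rw [hc]; simp only [mul_assoc]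
      _ = a * b := by rw [← hc', hca]
  have ha' : ∀ x, a * (a * x) = x := fun x => by rw [← mul_assoc, ha, one_mul]
  simp only [sub_mul, mul_sub, smul_mul_assoc, mul_smul_comm, one_mul, mul_one, mul_assoc,
    ha, hbc, ha', hca, ← hconj, ← hbraid]
  module

lemma sum_fin_cons {β : Type*} [AddCommMonoid β] (φ : (Fin (m + 1) → Fin n) → β) :
    ∑ H, φ H = ∑ c, ∑ h, φ (Fin.cons c h) := by
  rw [← Fintype.sum_prod_type']
  exact (Fintype.sum_equiv (Fin.consEquiv fun _ => Fin n) _ _ fun _ => rfl).symm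

lemma cons_cons_comp_swap (a b : Fin n) (f : Fin m → Fin n) :
    (Fin.cons a (Fin.cons b f) : Fin (m + 2) → Fin n) ∘ swap 0 1 = Fin.cons b (Fin.cons a f) := by
  funext l
  refine Fin.cases ?_ (fun l => Fin.cases ?_ (fun l => ?_) l) l
  · simp
  · simp [Fin.succ_zero_eq_one]
  · have h0 : (l.succ.succ : Fin (m + 2)) ≠ 0 := Fin.succ_ne_zero _
    have h1 : (l.succ.succ : Fin (m + 2)) ≠ 1 := by
      rw [← Fin.succ_zero_eq_one]; exact (Fin.succ_injective _).ne (Fin.succ_ne_zero _)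
    simp [swap_apply_of_ne_of_ne h0 h1]

lemma one_lt_succ_succ {L : ℕ} (k : Fin L) : (1 : Fin (L + 2)) < k.succ.succ := by
  simp [Fin.lt_def]

section Window

def window (M : ℕ) (i j : Fin m) (g : Fin m → Fin n) : ℕ :=
  ∑ l ∈ univ.filter (fun l => i < l ∧ l < j), gr M (g l)

lemma kEmb_apply (i j : Fin m) (X : E2 n) (f g : Fin m → Fin n) :
    kEmb M n m i j X f g =
      (if ∀ l, l ≠ i → l ≠ j → f l = g l then (1 : ℂ) else 0) * X (f i, f j) (g i, g j)
        * (-1 : ℂ) ^ ((gr M (f j) + gr M (g j)) * window M i j g) := rfl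

lemma window_comp_of_forall_eq {i j : Fin m} {σ : Perm (Fin m)}
    (hσ : ∀ l, i < l → l < j → σ l = l) (g : Fin m → Fin n) :
    window M i j (g ∘ σ) = window M i j g :=
  sum_congr rfl fun l hl => by
    simp only [mem_filter, mem_univ, true_and] at hl
    simp [hσ l hl.1 hl.2]

lemma window_comp_swap_of_notMem {i j a b : Fin m} (ha : ¬(i < a ∧ a < j))
    (hb : ¬(i < b ∧ b < j)) (g : Fin m → Fin n) :
    window M i j (g ∘ swap a b) = window M i j g :=
  window_comp_of_forall_eq (fun l hil hlj => swap_apply_of_ne_of_ne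
    (by rintro rfl; exact ha ⟨hil, hlj⟩) (by rintro rfl; exact hb ⟨hil, hlj⟩)) g

lemma window_comp_swap_of_notMem_of_mem {i j a b : Fin m} (ha : ¬(i < a ∧ a < j))
    (hb : i < b ∧ b < j) (g : Fin m → Fin n) :
    (window M i j (g ∘ swap a b) : ZMod 2) = window M i j g + gr M (g a) + gr M (g b) := by
  have hab : a ≠ b := by rintro rfl; exact ha hb
  have hmem : b ∈ univ.filter (fun l => i < l ∧ l < j) := by simpa using hb
  have key : window M i j (g ∘ swap a b) + gr M (g b) = window M i j g + gr M (g a) := by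
    have hrest : ∀ l ∈ (univ.filter fun l => i < l ∧ l < j).erase b,
        gr M ((g ∘ swap a b) l) = gr M (g l) := fun l hl => by
      simp only [mem_erase, mem_filter, mem_univ, true_and] at hl
      have hla : l ≠ a := by rintro rfl; exact ha hl.2
      simp [swap_apply_of_ne_of_ne hla hl.1]
    unfold window
    rw [← add_sum_erase _ _ hmem, ← add_sum_erase _ (fun l => gr M (g l)) hmem,
      sum_congr rfl hrest, Function.comp_apply, swap_apply_right]
    ring
  have key' := congrArg (Nat.cast : ℕ → ZMod 2) key
  push_cast at key'
  have h2 : (2 : ZMod 2) = 0 := rfl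
  linear_combination key' - (gr M (g b) : ZMod 2) * h2

lemma window_comp_swap_of_mem_of_mem {i j a b : Fin m} (ha : i < a ∧ a < j)
    (hb : i < b ∧ b < j) (g : Fin m → Fin n) :
    window M i j (g ∘ swap a b) = window M i j g := by
  unfold window
  refine sum_nbij' (swap a b) (swap a b) (fun l hl => ?_) (fun l hl => ?_) (fun l _ => by simp)
    (fun l _ => by simp) (fun l _ => by simp)
  all_goals
    simp only [mem_filter, mem_univ, true_and] at hl ⊢
    rcases eq_or_ne l a with rfl | hla
    · simpa using hb
    rcases eq_or_ne l b with rfl | hlb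
    · simpa using ha
    · simpa [swap_apply_of_ne_of_ne hla hlb] using hl

end Window

section GradedSwap

variable {i j k l i' j' k' l' : Fin m}

def gradedSwap (M n m : ℕ) (i j : Fin m) : Ten n m := kEmb M n m i j (Pm M n)

def swapExp (M : ℕ) (i j : Fin m) (g : Fin m → Fin n) : ℕ :=
  gr M (g i) * gr M (g j) + (gr M (g i) + gr M (g j)) * window M i j g

lemma eq_comp_swap_iff (hij : i ≠ j) (f g : Fin m → Fin n) :
    f = g ∘ swap i j ↔ (∀ l, l ≠ i → l ≠ j → f l = g l) ∧ f i = g j ∧ f j = g i := by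
  constructor
  · rintro rfl
    exact ⟨fun l hli hlj => by simp [swap_apply_of_ne_of_ne hli hlj], by simp, by simp⟩
  · rintro ⟨hrest, hi, hj⟩
    funext l
    rcases eq_or_ne l i with rfl | hli
    · simpa using hi
    rcases eq_or_ne l j with rfl | hlj
    · simpa using hj
    · simpa [swap_apply_of_ne_of_ne hli hlj] using hrest l hli hlj

lemma gradedSwap_apply (hij : i ≠ j) (f g : Fin m → Fin n) :
    gradedSwap M n m i j f g = if f = g ∘ swap i j then (-1 : ℂ) ^ swapExp M i j g else 0 := by
  rw [gradedSwap, kEmb_apply]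
  by_cases hf : f = g ∘ swap i j
  · obtain ⟨hrest, hi, hj⟩ := (eq_comp_swap_iff hij f g).1 hf
    rw [if_pos hf, if_pos hrest, Pm, Matrix.of_apply, if_pos ⟨hi, hj⟩, hj, one_mul, swapExp,
      pow_add]
  · rw [if_neg hf]
    by_cases hrest : ∀ l, l ≠ i → l ≠ j → f l = g l
    · have hswap : ¬(f i = g j ∧ f j = g i) := fun h =>
        hf ((eq_comp_swap_iff hij f g).2 ⟨hrest, h⟩)
      simp [Pm, hswap]
    · simp [hrest]

lemma gradedSwap_mul_gradedSwap (hij : i ≠ j) (hkl : k ≠ l) (f g : Fin m → Fin n) :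
    (gradedSwap M n m i j * gradedSwap M n m k l) f g =
      if f = g ∘ ⇑(swap k l * swap i j) then
        (-1 : ℂ) ^ (swapExp M i j (g ∘ swap k l) + swapExp M k l g)
      else 0 := by
  rw [Matrix.mul_apply, sum_eq_single (g ∘ swap k l)]
  · rw [gradedSwap_apply hij, gradedSwap_apply hkl, if_pos rfl, Perm.coe_mul, ← Function.comp_assoc]
    split_ifs <;> simp [pow_add]
  · intro h _ hh
    rw [gradedSwap_apply hkl, if_neg hh, mul_zero]
  · simp

lemma gradedSwap_mul_self (hij : i ≠ j) : gradedSwap M n m i j * gradedSwap M n m i j = 1 := by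
  ext f g
  have hexp : swapExp M i j (g ∘ swap i j) = swapExp M i j g := by
    have hw : window M i j (g ∘ swap i j) = window M i j g :=
      window_comp_swap_of_notMem (by simp) (by simp) g
    simp only [swapExp, hw, Function.comp_apply, swap_apply_left, swap_apply_right]
    ring
  rw [gradedSwap_mul_gradedSwap hij hij, swap_mul_self, Perm.coe_one, Function.comp_id, hexp,
    ← two_mul, pow_mul, neg_one_sq, one_pow, Matrix.one_apply]

lemma gradedSwap_mul_gradedSwap_eq (hij : i ≠ j) (hkl : k ≠ l) (hij' : i' ≠ j') (hkl' : k' ≠ l')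
    (hσ : swap k l * swap i j = swap k' l' * swap i' j')
    (hexp : ∀ g : Fin m → Fin n,
      ((swapExp M i j (g ∘ swap k l) + swapExp M k l g : ℕ) : ZMod 2)
        = swapExp M i' j' (g ∘ swap k' l') + swapExp M k' l' g) :
    gradedSwap M n m i j * gradedSwap M n m k l
      = gradedSwap M n m i' j' * gradedSwap M n m k' l' := by
  ext f g
  rw [gradedSwap_mul_gradedSwap hij hkl, gradedSwap_mul_gradedSwap hij' hkl', hσ]
  exact if_congr Iff.rfl (neg_one_pow_eq_of_cast_eq (by exact_mod_cast hexp g)) rfl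

end GradedSwap

section ThreeSlots

variable {j k : Fin (m + 2)}

lemma window_zero_one (g : Fin (m + 2) → Fin n) : window M 0 1 g = 0 :=
  sum_eq_zero fun l hl => by
    simp only [mem_filter, mem_univ, true_and, Fin.lt_def, Fin.val_zero, Fin.val_one] at hl
    omega

lemma window_zero_of_one_lt (hk : 1 < k) (g : Fin (m + 2) → Fin n) :
    window M 0 k g = gr M (g 1) + window M 1 k g := by
  have hset : univ.filter (fun l => 0 < l ∧ l < k)
      = insert 1 (univ.filter fun l => (1 : Fin (m + 2)) < l ∧ l < k) := by
    ext l
    simp only [mem_filter, mem_univ, true_and, mem_insert, Fin.lt_def, Fin.ext_iff,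
      Fin.val_zero, Fin.val_one] at hk ⊢
    omega
  rw [window, hset, sum_insert (by simp)]
  rfl

lemma swapExp_zero_one (g : Fin (m + 2) → Fin n) :
    swapExp M 0 1 g = gr M (g 0) * gr M (g 1) := by
  simp [swapExp, window_zero_one]

lemma gradedSwap_zero_mul_gradedSwap_zero_one (hk : 1 < k) :
    gradedSwap M n (m + 2) 0 k * gradedSwap M n (m + 2) 0 1
      = gradedSwap M n (m + 2) 0 1 * gradedSwap M n (m + 2) 1 k := by
  have h01 : (0 : Fin (m + 2)) ≠ 1 := Fin.zero_lt_one.ne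
  have h1k : (1 : Fin (m + 2)) ≠ k := hk.ne
  have h0k : (0 : Fin (m + 2)) ≠ k := (Fin.zero_lt_one.trans hk).ne
  refine gradedSwap_mul_gradedSwap_eq h0k h01 h01 h1k ?_ fun g => ?_
  · ext x
    simp only [Perm.mul_apply, swap_apply_def]
    split_ifs <;> simp_all
  · have hw : window M 1 k (g ∘ swap 0 1) = window M 1 k g :=
      window_comp_swap_of_notMem (by simp) (by simp) g
    simp only [swapExp, window_zero_of_one_lt hk, window_zero_one, hw, Function.comp_apply,
      swap_apply_left, swap_apply_right, swap_apply_of_ne_of_ne h01 h0k,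
      swap_apply_of_ne_of_ne h0k.symm h1k.symm]
    push_cast
    ring_nf
    reduce_mod_char

lemma gradedSwap_zero_mul_gradedSwap_zero_one' (hk : 1 < k) :
    gradedSwap M n (m + 2) 0 k * gradedSwap M n (m + 2) 0 1
      = gradedSwap M n (m + 2) 1 k * gradedSwap M n (m + 2) 0 k := by
  have h01 : (0 : Fin (m + 2)) ≠ 1 := Fin.zero_lt_one.ne
  have h1k : (1 : Fin (m + 2)) ≠ k := hk.ne
  have h0k : (0 : Fin (m + 2)) ≠ k := (Fin.zero_lt_one.trans hk).ne
  refine gradedSwap_mul_gradedSwap_eq h0k h01 h1k h0k ?_ fun g => ?_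
  · ext x
    simp only [Perm.mul_apply, swap_apply_def]
    split_ifs <;> simp_all
  · have hw : window M 1 k (g ∘ swap 0 1) = window M 1 k g :=
      window_comp_swap_of_notMem (by simp) (by simp) g
    have hw' : window M 1 k (g ∘ swap 0 k) = window M 1 k g :=
      window_comp_swap_of_notMem (by simp) (by simp) g
    simp only [swapExp, window_zero_of_one_lt hk, window_zero_one, hw, hw', Function.comp_apply,
      swap_apply_left, swap_apply_right, swap_apply_of_ne_of_ne h0k.symm h1k.symm,
      swap_apply_of_ne_of_ne h01.symm h1k]
    push_cast
    ring_nf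
    reduce_mod_char

lemma commute_gradedSwap_zero_gradedSwap_one (hj : 1 < j) (hk : 1 < k) (hjk : j ≠ k) :
    Commute (gradedSwap M n (m + 2) 0 j) (gradedSwap M n (m + 2) 1 k) := by
  have h01 : (0 : Fin (m + 2)) < 1 := Fin.zero_lt_one
  have h0j : (0 : Fin (m + 2)) ≠ j := (h01.trans hj).ne
  have h0k : (0 : Fin (m + 2)) ≠ k := (h01.trans hk).ne
  refine gradedSwap_mul_gradedSwap_eq h0j hk.ne hk.ne h0j ?_ fun g => ?_
  · refine (Perm.disjoint_swap_swap ?_).commute.eq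
    simp [h01.ne', hk.ne, hj.ne, hjk.symm, h0k.symm, h0j]
  · have hg0 : (g ∘ swap 1 k) 0 = g 0 := congrArg g (swap_apply_of_ne_of_ne h01.ne h0k)
    have hgj : (g ∘ swap 1 k) j = g j := congrArg g (swap_apply_of_ne_of_ne hj.ne' hjk)
    have hg1 : (g ∘ swap 0 j) 1 = g 1 := congrArg g (swap_apply_of_ne_of_ne h01.ne' hj.ne)
    have hgk : (g ∘ swap 0 j) k = g k := congrArg g (swap_apply_of_ne_of_ne h0k.symm hjk.symm)
    simp only [swapExp, hg0, hgj, hg1, hgk]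
    push_cast
    rcases hjk.lt_or_gt with hlt | hgt
    · rw [swap_comm 1 k, window_comp_swap_of_notMem_of_mem (by simp [hlt.le.not_gt]) ⟨h01, hj⟩,
        window_comp_swap_of_notMem_of_mem (by simp) ⟨hj, hlt⟩]
      ring
    · rw [window_comp_swap_of_mem_of_mem ⟨h01, hj⟩ ⟨h01.trans hk, hgt⟩,
        window_comp_swap_of_notMem (by simp) (by simp [hgt.le.not_gt])]
      ring

lemma gradedSwap_zero_one_conj (hk : 1 < k) :
    gradedSwap M n (m + 2) 0 1 * gradedSwap M n (m + 2) 1 k * gradedSwap M n (m + 2) 0 1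
      = gradedSwap M n (m + 2) 0 k := by
  rw [← gradedSwap_zero_mul_gradedSwap_zero_one hk, mul_assoc,
    gradedSwap_mul_self Fin.zero_lt_one.ne, mul_one]

end ThreeSlots

section RMatrix

lemma kEmb_one {i j : Fin m} (hij : i ≠ j) : kEmb M n m i j 1 = 1 := by
  ext f g
  rw [kEmb_apply, Matrix.one_apply, Matrix.one_apply]
  by_cases hfg : f = g
  · subst hfg
    rw [if_pos (fun _ _ _ => rfl), if_pos rfl, if_pos rfl, one_mul, one_mul, ← two_mul,
      mul_assoc, pow_mul, neg_one_sq, one_pow]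
  · rw [if_neg hfg]
    split_ifs with hrest hij'
    · exact absurd (funext fun l => by
        rcases eq_or_ne l i with rfl | hli
        · exact congrArg Prod.fst hij'
        rcases eq_or_ne l j with rfl | hlj
        · exact congrArg Prod.snd hij'
        · exact hrest l hli hlj) hfg
    all_goals simp

lemma kEmb_Rm {i j : Fin m} (hij : i ≠ j) (hb w : ℂ) :
    kEmb M n m i j (Rm M n hb w) = w • 1 - hb • gradedSwap M n m i j := by
  rw [← kEmb_one (M := M) hij]
  ext f g
  simp only [kEmb_apply, gradedSwap, Rm, Matrix.sub_apply, Matrix.smul_apply, smul_eq_mul]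
  ring

lemma kEmb_Rm_yangBaxter {k : Fin (m + 2)} (hk : 1 < k) (hb y z : ℂ) :
    kEmb M n (m + 2) 0 1 (Rm M n hb (y - z)) * kEmb M n (m + 2) 0 k (Rm M n hb y)
        * kEmb M n (m + 2) 1 k (Rm M n hb z)
      = kEmb M n (m + 2) 1 k (Rm M n hb z) * kEmb M n (m + 2) 0 k (Rm M n hb y)
        * kEmb M n (m + 2) 0 1 (Rm M n hb (y - z)) := by
  have h01 : (0 : Fin (m + 2)) ≠ 1 := Fin.zero_lt_one.ne
  rw [kEmb_Rm h01, kEmb_Rm (Fin.zero_lt_one.trans hk).ne, kEmb_Rm hk.ne]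
  exact yangBaxter_of_braid (gradedSwap_mul_self h01) (gradedSwap_zero_mul_gradedSwap_zero_one hk)
    (gradedSwap_zero_mul_gradedSwap_zero_one' hk) hb y z

lemma commute_kEmb_Rm {j k : Fin (m + 2)} (hj : 1 < j) (hk : 1 < k) (hjk : j ≠ k) (hb w w' : ℂ) :
    Commute (kEmb M n (m + 2) 0 j (Rm M n hb w)) (kEmb M n (m + 2) 1 k (Rm M n hb w')) := by
  have h := (commute_gradedSwap_zero_gradedSwap_one (M := M) (n := n) hj hk hjk).eq
  rw [kEmb_Rm (Fin.zero_lt_one.trans hj).ne, kEmb_Rm hk.ne, Commute, SemiconjBy]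
  simp only [sub_mul, mul_sub, smul_mul_assoc, mul_smul_comm, one_mul, mul_one, h]
  module

end RMatrix

section IdTensor

def idTensor (n m : ℕ) : Ten n m →ₐ[ℂ] Ten n (m + 1) :=
  (Matrix.reindexAlgEquiv ℂ ℂ (Fin.consEquiv fun _ => Fin n)).toAlgHom.comp
    ((Matrix.compAlgEquiv (Fin n) (Fin m → Fin n) ℂ ℂ).toAlgHom.comp
      (Matrix.scalarAlgHom (Fin n) ℂ))

lemma idTensor_apply (X : Ten n m) (F G : Fin (m + 1) → Fin n) :
    idTensor n m X F G = if F 0 = G 0 then X (Fin.tail F) (Fin.tail G) else 0 := by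
  simp only [idTensor, AlgHom.comp_apply]
  simp [Fin.consEquiv, Matrix.diagonal_apply]
  split_ifs <;> rfl

lemma window_succ (i j : Fin m) (G : Fin (m + 1) → Fin n) :
    window M i.succ j.succ G = window M i j (Fin.tail G) := by
  simp only [window, sum_filter, Fin.sum_univ_succ, Fin.succ_pos, not_lt_zero, false_and,
    if_false, zero_add, Fin.succ_lt_succ_iff, Fin.tail]

lemma idTensor_kEmb (i j : Fin m) (X : E2 n) :
    idTensor n m (kEmb M n m i j X) = kEmb M n (m + 1) i.succ j.succ X := by
  ext F G
  have hrest : (∀ l, l ≠ i.succ → l ≠ j.succ → F l = G l)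
      ↔ F 0 = G 0 ∧ ∀ l, l ≠ i → l ≠ j → Fin.tail F l = Fin.tail G l := by
    rw [Fin.forall_fin_succ]
    simp [(Fin.succ_ne_zero i).symm, (Fin.succ_ne_zero j).symm, Fin.tail]
  rw [idTensor_apply, kEmb_apply, kEmb_apply, window_succ, if_congr hrest rfl rfl, ite_and]
  split_ifs <;> simp [Fin.tail]

end IdTensor

section RTT

variable {L : ℕ}

lemma idTensor_Tmono (hb : ℂ) (a : Fin L → ℂ) (v : ℂ) :
    idTensor n (L + 1) (Tmono M n L hb a v)
      = ((List.finRange L).map fun k =>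
          kEmb M n (L + 2) 1 k.succ.succ (Rm M n hb (v - a k))).prod := by
  rw [Tmono, List.ofFn_eq_map, map_list_prod, List.map_map]
  congr 1
  exact List.map_congr_left fun k _ => by simp [idTensor_kEmb, Fin.succ_zero_eq_one]

lemma gradedSwap_conj_idTensor_Tmono (hb : ℂ) (a : Fin L → ℂ) (u : ℂ) :
    gradedSwap M n (L + 2) 0 1 * idTensor n (L + 1) (Tmono M n L hb a u)
        * gradedSwap M n (L + 2) 0 1
      = ((List.finRange L).map fun k =>
          kEmb M n (L + 2) 0 k.succ.succ (Rm M n hb (u - a k))).prod := by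
  rw [idTensor_Tmono, mul_list_prod_mul_of_mul_self_eq_one
    (gradedSwap_mul_self Fin.zero_lt_one.ne), List.map_map]
  congr 1
  refine List.map_congr_left fun k _ => ?_
  rw [Function.comp_apply, kEmb_Rm (one_lt_succ_succ k).ne,
    kEmb_Rm (Fin.zero_lt_one.trans (one_lt_succ_succ k)).ne,
    ← gradedSwap_zero_one_conj (one_lt_succ_succ k)]
  simp only [mul_sub, sub_mul, mul_smul_comm, smul_mul_assoc, mul_one,
    gradedSwap_mul_self Fin.zero_lt_one.ne]

theorem Tmono_rtt (hb : ℂ) (a : Fin L → ℂ) (u v : ℂ) :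
    kEmb M n (L + 2) 0 1 (Rm M n hb (u - v))
        * (gradedSwap M n (L + 2) 0 1 * idTensor n (L + 1) (Tmono M n L hb a u)
          * gradedSwap M n (L + 2) 0 1)
        * idTensor n (L + 1) (Tmono M n L hb a v)
      = idTensor n (L + 1) (Tmono M n L hb a v)
        * (gradedSwap M n (L + 2) 0 1 * idTensor n (L + 1) (Tmono M n L hb a u)
          * gradedSwap M n (L + 2) 0 1)
        * kEmb M n (L + 2) 0 1 (Rm M n hb (u - v)) := by
  rw [gradedSwap_conj_idTensor_Tmono, idTensor_Tmono]
  refine mul_prod_map_mul_prod_map_of_yangBaxter _ _ _ (List.nodup_finRange L)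
    (fun j k hjk => commute_kEmb_Rm (one_lt_succ_succ j) (one_lt_succ_succ k)
      (by simpa using hjk) _ _ _) fun k => ?_
  rw [show u - v = (u - a k) - (v - a k) by ring]
  exact kEmb_Rm_yangBaxter (one_lt_succ_succ k) _ _ _

end RTT

section Trace

def twTrace (s : Fin n → ℂ) : Ten n (m + 1) →ₗ[ℂ] Ten n m where
  toFun X := ∑ a, s a • blk X a a
  map_add' X Y := by simp only [← sum_add_distrib, ← smul_add]; rfl
  map_smul' c X := by
    simp only [smul_sum, RingHom.id_apply]
    exact sum_congr rfl fun a _ => (smul_comm c (s a) (blk X a a)).symm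

lemma twTrace_apply (s : Fin n → ℂ) (X : Ten n (m + 1)) (f g : Fin m → Fin n) :
    twTrace s X f g = ∑ a, s a * X (Fin.cons a f) (Fin.cons a g) := by
  simp [twTrace, blk, Matrix.sum_apply]

lemma gradedSwap_zero_one_mul_apply (Z : Ten n (m + 2)) (F G : Fin (m + 2) → Fin n) :
    (gradedSwap M n (m + 2) 0 1 * Z) F G
      = (-1 : ℂ) ^ (gr M (F 0) * gr M (F 1)) * Z (F ∘ swap 0 1) G := by
  rw [Matrix.mul_apply, sum_eq_single (F ∘ swap 0 1)]
  · rw [gradedSwap_apply Fin.zero_lt_one.ne, if_pos (by ext; simp), swapExp_zero_one]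
    simp [mul_comm]
  · intro H _ hH
    rw [gradedSwap_apply Fin.zero_lt_one.ne, if_neg fun h => hH (by rw [h]; ext; simp),
      zero_mul]
  · simp

lemma mul_gradedSwap_zero_one_apply (Z : Ten n (m + 2)) (F G : Fin (m + 2) → Fin n) :
    (Z * gradedSwap M n (m + 2) 0 1) F G
      = (-1 : ℂ) ^ (gr M (G 0) * gr M (G 1)) * Z F (G ∘ swap 0 1) := by
  rw [Matrix.mul_apply, sum_eq_single (G ∘ swap 0 1)]
  · rw [gradedSwap_apply Fin.zero_lt_one.ne, if_pos rfl, swapExp_zero_one, mul_comm]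
  · intro H _ hH
    rw [gradedSwap_apply Fin.zero_lt_one.ne, if_neg hH, mul_zero]
  · simp

lemma twTrace_twTrace_apply (s : Fin n → ℂ) (Z : Ten n (m + 2)) (f g : Fin m → Fin n) :
    twTrace s (twTrace s Z) f g
      = ∑ b, ∑ a, s b * s a * Z (Fin.cons a (Fin.cons b f)) (Fin.cons a (Fin.cons b g)) := by
  simp only [twTrace_apply, mul_sum, mul_assoc]

lemma twTrace_twTrace_gradedSwap_mul_comm (s : Fin n → ℂ) (Z : Ten n (m + 2)) :
    twTrace s (twTrace s (gradedSwap M n (m + 2) 0 1 * Z))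
      = twTrace s (twTrace s (Z * gradedSwap M n (m + 2) 0 1)) := by
  ext f g
  simp only [twTrace_twTrace_apply, gradedSwap_zero_one_mul_apply, mul_gradedSwap_zero_one_apply,
    cons_cons_comp_swap, Fin.cons_zero, Fin.cons_one]
  rw [sum_comm]
  exact sum_congr rfl fun a _ => sum_congr rfl fun b _ => by ring

lemma gradedSwap_conj_idTensor_apply (X : Ten n (m + 1)) (a b c d : Fin n)
    (f g : Fin m → Fin n) :
    (gradedSwap M n (m + 2) 0 1 * idTensor n (m + 1) X * gradedSwap M n (m + 2) 0 1)
        (Fin.cons a (Fin.cons b f)) (Fin.cons c (Fin.cons d g))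
      = if b = d then (-1 : ℂ) ^ (gr M a * gr M b + gr M c * gr M d)
          * X (Fin.cons a f) (Fin.cons c g) else 0 := by
  rw [mul_gradedSwap_zero_one_apply, gradedSwap_zero_one_mul_apply, cons_cons_comp_swap,
    cons_cons_comp_swap, idTensor_apply]
  by_cases hbd : b = d
  · subst hbd
    simp only [Fin.cons_zero, Fin.cons_one, Fin.tail_cons, if_true, pow_add]
    ring
  · simp [hbd]

lemma twTrace_twTrace_gradedSwap_conj_idTensor_mul_idTensor (s : Fin n → ℂ)
    (X Y : Ten n (m + 1)) :
    twTrace s (twTrace s (gradedSwap M n (m + 2) 0 1 * idTensor n (m + 1) X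
        * gradedSwap M n (m + 2) 0 1 * idTensor n (m + 1) Y))
      = twTrace s X * twTrace s Y := by
  ext f g
  have hentry : ∀ a b, (gradedSwap M n (m + 2) 0 1 * idTensor n (m + 1) X
        * gradedSwap M n (m + 2) 0 1 * idTensor n (m + 1) Y)
          (Fin.cons a (Fin.cons b f)) (Fin.cons a (Fin.cons b g))
        = ∑ h, X (Fin.cons a f) (Fin.cons a h) * Y (Fin.cons b h) (Fin.cons b g) := by
    intro a b
    rw [Matrix.mul_apply, sum_fin_cons]
    simp_rw [sum_fin_cons (m := m)]
    simp only [gradedSwap_conj_idTensor_apply, idTensor_apply, Fin.cons_zero, Fin.tail_cons,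
      ite_mul, zero_mul]
    rw [sum_eq_single a (fun c _ hc => by simp [hc]) (by simp),
      sum_eq_single b (fun d _ hd => by simp [Ne.symm hd]) (by simp)]
    simp only [if_true, ← two_mul, pow_mul, neg_one_sq, one_pow, one_mul]
  rw [twTrace_twTrace_apply, Matrix.mul_apply]
  simp only [hentry, twTrace_apply, mul_sum, sum_mul]
  refine (sum_congr rfl fun b _ => sum_comm).trans ?_
  rw [sum_comm]
  exact sum_congr rfl fun h _ => sum_congr rfl fun b _ => sum_congr rfl fun a _ => by ring

end Trace

section Commutativity

variable {L : ℕ}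

lemma twTrace_twTrace_affine_mul_comm (s : Fin n → ℂ) (α β : ℂ) (Z : Ten n (m + 2)) :
    twTrace s (twTrace s ((α • 1 + β • gradedSwap M n (m + 2) 0 1) * Z))
      = twTrace s (twTrace s (Z * (α • 1 + β • gradedSwap M n (m + 2) 0 1))) := by
  simp only [add_mul, mul_add, smul_mul_assoc, mul_smul_comm, one_mul, mul_one, map_add, map_smul,
    twTrace_twTrace_gradedSwap_mul_comm]

lemma twTrace_twTrace_eq_of_mul_eq_mul (s : Fin n → ℂ) {R R' X Y : Ten n (m + 2)} {c : ℂ}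
    (hc : c ≠ 0) (hR'R : R' * R = c • 1) (hRR' : R * R' = c • 1)
    (hcyc : ∀ Z, twTrace s (twTrace s (R' * Z)) = twTrace s (twTrace s (Z * R')))
    (hRX : R * X = Y * R) :
    twTrace s (twTrace s X) = twTrace s (twTrace s Y) := by
  refine smul_right_injective _ hc ?_
  calc c • twTrace s (twTrace s X) = twTrace s (twTrace s (R' * (R * X))) := by
        rw [← mul_assoc, hR'R, smul_mul_assoc, one_mul, map_smul, map_smul]
    _ = twTrace s (twTrace s (Y * R * R')) := by rw [hRX, hcyc]
    _ = c • twTrace s (twTrace s Y) := by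
        rw [mul_assoc, hRR', mul_smul_comm, mul_one, map_smul, map_smul]

theorem twTrace_Tmono_commute_of_sq_ne (s : Fin n → ℂ) (hb : ℂ) (a : Fin L → ℂ) {u v : ℂ}
    (huv : (u - v) ^ 2 ≠ hb ^ 2) :
    Commute (twTrace s (Tmono M n L hb a u)) (twTrace s (Tmono M n L hb a v)) := by
  have hA : gradedSwap M n (L + 2) 0 1 * gradedSwap M n (L + 2) 0 1 = 1 :=
    gradedSwap_mul_self Fin.zero_lt_one.ne
  have hR : kEmb M n (L + 2) 0 1 (Rm M n hb (u - v))
      = (u - v) • 1 + (-hb) • gradedSwap M n (L + 2) 0 1 := by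
    rw [kEmb_Rm Fin.zero_lt_one.ne, neg_smul, sub_eq_add_neg]
  have hRTT := Tmono_rtt (M := M) (n := n) hb a u v
  have htrace := twTrace_twTrace_eq_of_mul_eq_mul s (sub_ne_zero.2 huv)
    (R := kEmb M n (L + 2) 0 1 (Rm M n hb (u - v)))
    (R' := (u - v) • 1 + hb • gradedSwap M n (L + 2) 0 1)
    (by simp only [hR, add_mul, mul_add, smul_mul_assoc, mul_smul_comm, one_mul, mul_one, hA]
        module)
    (by simp only [hR, add_mul, mul_add, smul_mul_assoc, mul_smul_comm, one_mul, mul_one, hA]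
        module)
    (twTrace_twTrace_affine_mul_comm s _ _) (by rw [← mul_assoc, hRTT])
  have hswapped : twTrace s (twTrace s (idTensor n (L + 1) (Tmono M n L hb a v)
      * (gradedSwap M n (L + 2) 0 1 * idTensor n (L + 1) (Tmono M n L hb a u)
        * gradedSwap M n (L + 2) 0 1)))
      = twTrace s (Tmono M n L hb a v) * twTrace s (Tmono M n L hb a u) := by
    rw [← mul_assoc, ← twTrace_twTrace_gradedSwap_mul_comm, ← mul_assoc, ← mul_assoc]
    exact twTrace_twTrace_gradedSwap_conj_idTensor_mul_idTensor s _ _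
  exact (twTrace_twTrace_gradedSwap_conj_idTensor_mul_idTensor s _ _).symm.trans
    (htrace.trans hswapped)

lemma continuous_twTrace_Tmono (s : Fin n → ℂ) (hb : ℂ) (a : Fin L → ℂ) :
    Continuous fun v => twTrace s (Tmono M n L hb a v) := by
  have hT : Continuous fun v => Tmono M n L hb a v := by
    simp only [Tmono, List.ofFn_eq_map]
    refine continuous_list_prod _ fun k _ => ?_
    simp only [kEmb_Rm (Fin.succ_ne_zero k).symm]
    fun_prop
  exact (twTrace s).continuous_of_finiteDimensional.comp hT

theorem twTrace_Tmono_commute (s : Fin n → ℂ) (hb : ℂ) (a : Fin L → ℂ) (u v : ℂ) :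
    Commute (twTrace s (Tmono M n L hb a u)) (twTrace s (Tmono M n L hb a v)) := by
  have hdense : Dense ({u - hb, u + hb}ᶜ : Set ℂ) :=
    (Set.toFinite _).countable.dense_compl ℂ
  have hcont := continuous_twTrace_Tmono (M := M) s hb a
  refine congrFun (Continuous.ext_on hdense (continuous_const.mul hcont)
    (hcont.mul continuous_const) fun w hw => (twTrace_Tmono_commute_of_sq_ne s hb a
      fun h => hw ?_).eq) v
  rw [Set.mem_insert_iff, Set.mem_singleton_iff]
  rcases sq_eq_sq_iff_eq_or_eq_neg.1 h with h' | h'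
  · exact Or.inl (by linear_combination -h')
  · exact Or.inr (by linear_combination -h')

lemma stm_eq_twTrace (hb : ℂ) (a : Fin L → ℂ) (u : ℂ) :
    stm M n L hb a u = twTrace (fun i => (-1) ^ gr M i) (Tmono M n L hb a u) := rfl

lemma tm_eq_twTrace (hb : ℂ) (a : Fin L → ℂ) (u : ℂ) :
    tm M n L hb a u = twTrace (fun _ => 1) (Tmono M n L hb a u) := by
  simp [tm, twTrace]

end Commutativity

theorem statement7_general (M N : ℕ) (hb : ℂ)
    (L : ℕ) (sh : Fin L → ℂ) :
    ∀ u v : ℂ,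
      stm M (M + N) L hb sh u * stm M (M + N) L hb sh v
        = stm M (M + N) L hb sh v * stm M (M + N) L hb sh u ∧
      tm M (M + N) L hb sh u * tm M (M + N) L hb sh v
        = tm M (M + N) L hb sh v * tm M (M + N) L hb sh u := by
  intro u v
  simp only [stm_eq_twTrace, tm_eq_twTrace]
  exact ⟨twTrace_Tmono_commute _ hb sh u v, twTrace_Tmono_commute _ hb sh u v⟩

/-- Both the supertrace and the trace transfer matrices generate
commutative families: `[st(u), st(v)] = 0` and `[t(u), t(v)] = 0`. -/
theorem statement7 (M N : ℕ) (hM : 1 ≤ M) (hN : 1 ≤ N) (hb : ℂ) (hhb : hb ≠ 0)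
    (L : ℕ) (hL : 1 ≤ L) (sh : Fin L → ℂ) :
    ∀ u v : ℂ,
      stm M (M + N) L hb sh u * stm M (M + N) L hb sh v
        = stm M (M + N) L hb sh v * stm M (M + N) L hb sh u ∧
      tm M (M + N) L hb sh u * tm M (M + N) L hb sh v
        = tm M (M + N) L hb sh v * tm M (M + N) L hb sh u :=
  statement7_general M N hb L sh

end SuperSpin
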